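/- Let h : S¹ → S¹ be an orientation-preserving homeomorphism with h(ℤ[1/2]) ⊆ ℤ[1/2], and assume that h ∘ ν₂ ∘ h⁻¹ is an everywhere-defined element of T̄_{2,1}. Then h · T_{2,1} · h⁻¹ ⊆ T_{2,1}. -/

import Mathlib

noncomputable section

/-- `ℤ[1/n]` realized as a subset of `ℝ`: all reals of the form `a * n^b` with `a b : ℤ`. -/
def zpows (n : ℕ) : Set ℝ := {x : ℝ | ∃ a b : ℤ, x = (a : ℝ) * (n : ℝ) ^ b}

/-- The defining properties of the (unique) ring homomorphism `φₙ : ℤ[1/n] → ℤ/(n-1)ℤ`,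
expressed for a function `φ : ℝ → ZMod (n-1)` restricted to the subset `zpows n`. -/
def IsPhi (n : ℕ) (φ : ℝ → ZMod (n - 1)) : Prop :=
  (∀ x ∈ zpows n, ∀ y ∈ zpows n, φ (x + y) = φ x + φ y) ∧
  (∀ x ∈ zpows n, ∀ y ∈ zpows n, φ (x * y) = φ x * φ y) ∧
  φ 1 = 1

/-- Piecewise linearity data on the circle `ℝ/rℤ`, expressed for an `r`-periodic lift
`F : ℝ → ℝ`: there is an `r`-periodic break set `B ⊆ ℤ[1/n]`, finite in each period,
off which `F` is locally affine with slopes integral powers of `n`. -/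
def CircPL (n : ℕ) (r : ℝ) (F : ℝ → ℝ) : Prop :=
  ∃ B : Set ℝ,
    (B ∩ Set.Ico (0 : ℝ) r).Finite ∧ (∀ x ∈ B, x + r ∈ B ∧ x - r ∈ B) ∧ B ⊆ zpows n ∧
    ∀ x ∉ B, ∃ (k : ℤ) (c : ℝ), ∃ ε > 0, ∀ y : ℝ, |y - x| < ε → F y = (n : ℝ) ^ k * y + c

/-- Membership in `T_{n,r}`: an orientation-preserving homeomorphism of the circle
`S_r = ℝ/rℤ` (encoded by a strictly monotone surjective lift commuting with `x ↦ x + r`),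
piecewise linear with finitely many breaks, all breaks in `ℤ[1/n]`, all slopes integral
powers of `n`, and mapping (the image of) `ℤ[1/n]` into itself. -/
def MemT (n : ℕ) (r : ℝ) (f : AddCircle r → AddCircle r) : Prop :=
  ∃ F : ℝ → ℝ,
    (∀ x : ℝ, f (x : AddCircle r) = ((F x : ℝ) : AddCircle r)) ∧
    (∀ x : ℝ, F (x + r) = F x + r) ∧
    StrictMono F ∧ Function.Surjective F ∧ CircPL n r F ∧
    (∀ q ∈ zpows n, F q ∈ zpows n)

/-- An everywhere-defined element of `T̄_{n,r}`: a continuous, locally orientation-preserving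
local homeomorphism of the circle `S_r` (encoded by a strictly monotone continuous lift `G`
with `G (x + r) = G x + d·r` for some degree `d ≥ 1`), piecewise linear with finitely many
breaks, all breaks in `ℤ[1/n]`, all slopes integral powers of `n`, and mapping `ℤ[1/n]`
into itself. -/
def MemTbar (n : ℕ) (r : ℝ) (g : AddCircle r → AddCircle r) : Prop :=
  ∃ (G : ℝ → ℝ) (d : ℕ), 0 < d ∧
    (∀ x : ℝ, g (x : AddCircle r) = ((G x : ℝ) : AddCircle r)) ∧
    (∀ x : ℝ, G (x + r) = G x + (d : ℝ) * r) ∧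
    StrictMono G ∧ Continuous G ∧ CircPL n r G ∧
    (∀ q ∈ zpows n, G q ∈ zpows n)

/-- An orientation-preserving homeomorphism of the circle `S_r`, encoded by the existence
of a strictly monotone surjective lift commuting with `x ↦ x + r`. -/
def OrientedHomeo (r : ℝ) (h : AddCircle r → AddCircle r) : Prop :=
  ∃ H : ℝ → ℝ,
    (∀ x : ℝ, h (x : AddCircle r) = ((H x : ℝ) : AddCircle r)) ∧
    (∀ x : ℝ, H (x + r) = H x + r) ∧
    StrictMono H ∧ Function.Surjective H

/-- The doubling map `ν₂ : S¹ → S¹`, `x ↦ 2x (mod 1)`. -/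
def nu2 : AddCircle (1 : ℝ) → AddCircle (1 : ℝ) := fun z => z + z

/-- The image of the dyadic rationals `ℤ[1/2]` in the circle `S¹ = ℝ/ℤ`. -/
def dyadicCircle : Set (AddCircle (1 : ℝ)) :=
  {z : AddCircle (1 : ℝ) | ∃ q ∈ zpows 2, z = ((q : ℝ) : AddCircle (1 : ℝ))}

/-!
A lift `H` of `h` conjugates `y ↦ 2y` to a lift `G` of `h ν₂ h⁻¹`, so `H (2^s y) = G^s (H y)`.
Where a lift `F` of `f ∈ T_{2,1}` is affine, `F y = 2^k y + c` with `c` dyadic, choose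
`t, K ∈ ℕ` and `p ∈ ℤ` with `2^t (2^k y + c) = 2^K y + p`; then `G^t ∘ (H F H⁻¹) = G^K + p` on the
corresponding interval. Since `G^t` and `G^K + p` are piecewise affine with dyadic breaks and
dyadic data, cancelling `G^t` shows that `H F H⁻¹` is too. Near a break `x` of `F` one uses the
affine pieces on both sides of `x`, and `H x` is dyadic; compactness then bounds the number of
breaks of `H F H⁻¹` in each period.
-/

open Set Filter Topology Function

def dyadics : Subring ℝ where
  carrier := zpows 2
  mul_mem' := by
    rintro _ _ ⟨a, b, rfl⟩ ⟨a', b', rfl⟩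
    exact ⟨a * a', b + b', by push_cast; rw [zpow_add₀ two_ne_zero]; ring⟩
  one_mem' := ⟨1, 0, by simp⟩
  add_mem' := by
    have split : ∀ b m : ℤ, m ≤ b → (2 : ℝ) ^ b = 2 ^ (b - m).toNat * 2 ^ m := fun b m hmb => by
      rw [← zpow_natCast, Int.toNat_of_nonneg (by omega), ← zpow_add₀ two_ne_zero, sub_add_cancel]
    rintro _ _ ⟨a, b, rfl⟩ ⟨a', b', rfl⟩
    refine ⟨a * 2 ^ (b - min b b').toNat + a' * 2 ^ (b' - min b b').toNat, min b b', ?_⟩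
    push_cast
    rw [split b _ (min_le_left b b'), split b' _ (min_le_right b b')]
    ring
  zero_mem' := ⟨0, 0, by simp⟩
  neg_mem' := by
    rintro _ ⟨a, b, rfl⟩
    exact ⟨-a, b, by push_cast; ring⟩

lemma zpow_mem_dyadics (k : ℤ) : (2 : ℝ) ^ k ∈ dyadics := ⟨1, k, by simp⟩

lemma exists_dyadic_abs_sub_lt (x : ℝ) {ε : ℝ} (hε : 0 < ε) : ∃ q ∈ dyadics, |q - x| < ε := by
  obtain ⟨n, hn⟩ := exists_pow_lt_of_lt_one hε one_half_lt_one
  have h2n : (0 : ℝ) < 2 ^ n := by positivity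
  refine ⟨⌊x * 2 ^ n⌋ / 2 ^ n, ⟨⌊x * 2 ^ n⌋, -n, by simp [div_eq_mul_inv]⟩, ?_⟩
  rw [abs_sub_comm, abs_of_nonneg (by rw [sub_nonneg, div_le_iff₀ h2n]; exact Int.floor_le _),
    sub_div' h2n.ne', div_lt_iff₀ h2n]
  calc x * 2 ^ n - ⌊x * 2 ^ n⌋ < 1 := by linarith [Int.lt_floor_add_one (x * 2 ^ n)]
    _ = (1 / 2) ^ n * 2 ^ n := by rw [← mul_pow]; norm_num
    _ < ε * 2 ^ n := by gcongr

lemma exists_two_pow_mul_affine_eq (k : ℤ) {c : ℝ} (hc : c ∈ dyadics) :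
    ∃ t K : ℕ, ∃ p : ℤ, ∀ y : ℝ, 2 ^ t * (2 ^ k * y + c) = 2 ^ K * y + p := by
  obtain ⟨a, b, rfl⟩ := hc
  set t := k.natAbs + b.natAbs
  have toNat_zpow : ∀ m : ℤ, 0 ≤ m → (2 : ℝ) ^ m.toNat = 2 ^ m := fun m hm => by
    rw [← zpow_natCast, Int.toNat_of_nonneg hm]
  refine ⟨t, (k + t).toNat, a * 2 ^ (b + t).toNat, fun y => ?_⟩
  push_cast
  rw [toNat_zpow _ (by omega), toNat_zpow _ (by omega), ← zpow_natCast, zpow_add₀ two_ne_zero,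
    zpow_add₀ two_ne_zero]
  ring

def DyadicAffineAt (F : ℝ → ℝ) (x : ℝ) : Prop :=
  ∃ k : ℤ, ∃ c ∈ dyadics, F =ᶠ[𝓝 x] fun y => 2 ^ k * y + c

def dyadicBreaks (F : ℝ → ℝ) : Set ℝ := {x | ¬ DyadicAffineAt F x}

lemma mem_dyadicBreaks {F : ℝ → ℝ} {x : ℝ} : x ∈ dyadicBreaks F ↔ ¬ DyadicAffineAt F x := Iff.rfl

lemma dyadicAffineAt_add_const {a : ℝ} (ha : a ∈ dyadics) (x : ℝ) :
    DyadicAffineAt (· + a) x :=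
  ⟨0, a, ha, by simp⟩

namespace DyadicAffineAt

variable {F Φ Q : ℝ → ℝ} {x : ℝ}

lemma congr (h : DyadicAffineAt F x) (hFQ : F =ᶠ[𝓝 x] Q) : DyadicAffineAt Q x :=
  let ⟨k, c, hc, hF⟩ := h
  ⟨k, c, hc, hFQ.symm.trans hF⟩

lemma continuousAt (h : DyadicAffineAt F x) : ContinuousAt F x :=
  let ⟨_, _, _, hF⟩ := h
  (by fun_prop : Continuous _).continuousAt.congr hF.symm

lemma comp (hΦ : DyadicAffineAt Φ x) (hQ : DyadicAffineAt Q (Φ x)) :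
    DyadicAffineAt (Q ∘ Φ) x := by
  obtain ⟨k, c, hc, hΦe⟩ := id hΦ
  obtain ⟨k', c', hc', hQe⟩ := hQ
  refine ⟨k' + k, 2 ^ k' * c + c', add_mem (mul_mem (zpow_mem_dyadics _) hc) hc', ?_⟩
  filter_upwards [hΦe, hΦ.continuousAt.eventually hQe] with y hy hQy
  rw [comp_apply, hQy, hy, zpow_add₀ two_ne_zero]
  ring

lemma of_comp (hΦ : ContinuousAt Φ x) (hQ : DyadicAffineAt Q (Φ x))
    (hQΦ : DyadicAffineAt (Q ∘ Φ) x) : DyadicAffineAt Φ x := by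
  obtain ⟨k, c, hc, hQe⟩ := hQ
  obtain ⟨k', c', hc', hQΦe⟩ := hQΦ
  refine ⟨k' - k, 2 ^ (-k) * (c' - c), mul_mem (zpow_mem_dyadics _) (sub_mem hc' hc), ?_⟩
  filter_upwards [hQΦe, hΦ.eventually hQe] with y h₁ h₂
  rw [comp_apply, h₂] at h₁
  rw [zpow_sub₀ two_ne_zero, zpow_neg]
  field_simp
  linarith

lemma mem_of_apply_mem (h : DyadicAffineAt F x) (hx : F x ∈ dyadics) : x ∈ dyadics := by
  obtain ⟨k, c, hc, hF⟩ := h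
  have : x = 2 ^ (-k) * (F x - c) := by
    rw [hF.eq_of_nhds, zpow_neg]
    field_simp
    ring
  rw [this]
  exact mul_mem (zpow_mem_dyadics _) (sub_mem hx hc)

lemma exists_eqOn_Ioo (h : DyadicAffineAt F x) :
    ∃ α < x, ∃ β > x, ∃ k : ℤ, ∃ c ∈ dyadics, EqOn F (fun y => 2 ^ k * y + c) (Ioo α β) := by
  obtain ⟨k, c, hc, hF⟩ := h
  obtain ⟨α, β, ⟨hα, hβ⟩, hsub⟩ := mem_nhds_iff_exists_Ioo_subset.1 hF
  exact ⟨α, hα, β, hβ, k, c, hc, fun y hy => hsub hy⟩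

end DyadicAffineAt

lemma dyadicAffineAt_add_one_iff {F : ℝ → ℝ} (hF : ∀ y, F (y + 1) = F y + 1) {x : ℝ} :
    DyadicAffineAt F (x + 1) ↔ DyadicAffineAt F x := by
  have hconj : ((· + -1) ∘ F ∘ (· + 1)) = F := funext fun y => by simp [hF]
  constructor
  · intro h
    rw [← hconj]
    exact ((dyadicAffineAt_add_const dyadics.one_mem x).comp h).comp
      (dyadicAffineAt_add_const (neg_mem dyadics.one_mem) _)
  · intro h
    have hconj' : ((· + 1) ∘ F ∘ (· + -1)) = F := funext fun y => by
      simpa using (hF (y + -1)).symm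
    rw [← hconj']
    refine ((dyadicAffineAt_add_const (neg_mem dyadics.one_mem) _).comp ?_).comp
      (dyadicAffineAt_add_const dyadics.one_mem _)
    simpa using h

lemma exists_eqOn_Ioo_of_forall_dyadicAffineAt {F : ℝ → ℝ} {a b : ℝ} (hab : a < b)
    (h : ∀ y ∈ Ioo a b, DyadicAffineAt F y) :
    ∃ k : ℤ, ∃ c ∈ dyadics, EqOn F (fun y => 2 ^ k * y + c) (Ioo a b) := by
  -- `deriv F` is locally constant, hence constant on the interval.
  have hderiv : ∀ y ∈ Ioo a b, ∃ k : ℤ, ∀ᶠ z in 𝓝 y, HasDerivAt F (2 ^ k) z := fun y hy => by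
    obtain ⟨k, c, -, hF⟩ := h y hy
    refine ⟨k, hF.eventuallyEq_nhds.mono fun z hz => ?_⟩
    simpa using (((hasDerivAt_id z).const_mul ((2 : ℝ) ^ k)).add_const c).congr_of_eventuallyEq hz
  have hdiff : DifferentiableOn ℝ F (Ioo a b) := fun y hy =>
    let ⟨_, hk⟩ := hderiv y hy
    hk.self_of_nhds.differentiableAt.differentiableWithinAt
  have hloc : ∀ y ∈ Ioo a b, deriv F =ᶠ[𝓝 y] fun _ => deriv F y := fun y hy => by
    obtain ⟨k, hk⟩ := hderiv y hy
    filter_upwards [hk] with z hz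
    rw [hz.deriv, hk.self_of_nhds.deriv]
  have hmid : (a + b) / 2 ∈ Ioo a b := ⟨by linarith, by linarith⟩
  obtain ⟨k, c, hc, hF⟩ := h _ hmid
  have hderiv_diff : DifferentiableOn ℝ (deriv F) (Ioo a b) := fun z hz =>
    ((differentiableAt_const _).congr_of_eventuallyEq (hloc z hz)).differentiableWithinAt
  have hslope : EqOn (deriv F) (deriv fun y => 2 ^ k * y) (Ioo a b) := fun y hy => by
    rw [isOpen_Ioo.is_const_of_deriv_eq_zero isPreconnected_Ioo hderiv_diff
      (fun z hz => by simp [(hloc z hz).deriv_eq]) hy hmid, hF.deriv_eq]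
    simp
  obtain ⟨c', hc'⟩ := isOpen_Ioo.exists_eq_add_of_deriv_eq isPreconnected_Ioo hdiff
    (by fun_prop) hslope
  have : c' = c := by linarith [hc' hmid, hF.eq_of_nhds]
  exact ⟨k, c, hc, this ▸ hc'⟩

structure IsDyadicPLOn (F : ℝ → ℝ) (s : Set ℝ) : Prop where
  finite_breaks : (dyadicBreaks F ∩ s).Finite
  breaks_subset : dyadicBreaks F ∩ s ⊆ dyadics
  mapsTo : MapsTo F (dyadics ∩ s) dyadics

namespace IsDyadicPLOn

variable {F : ℝ → ℝ} {s t : Set ℝ}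

lemma mono (h : IsDyadicPLOn F t) (hst : s ⊆ t) : IsDyadicPLOn F s where
  finite_breaks := h.finite_breaks.subset (inter_subset_inter_right _ hst)
  breaks_subset := (inter_subset_inter_right _ hst).trans h.breaks_subset
  mapsTo := h.mapsTo.mono_left (inter_subset_inter_right _ hst)

lemma union (hs : IsDyadicPLOn F s) (ht : IsDyadicPLOn F t) : IsDyadicPLOn F (s ∪ t) where
  finite_breaks := by rw [inter_union_distrib_left]; exact hs.finite_breaks.union ht.finite_breaks
  breaks_subset := by
    rw [inter_union_distrib_left]; exact union_subset hs.breaks_subset ht.breaks_subset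
  mapsTo := by rw [inter_union_distrib_left]; exact hs.mapsTo.union ht.mapsTo

lemma singleton {w : ℝ} (hw : w ∈ dyadics) (hFw : F w ∈ dyadics) : IsDyadicPLOn F {w} where
  finite_breaks := (finite_singleton w).subset inter_subset_right
  breaks_subset _ hv := (mem_singleton_iff.1 hv.2) ▸ hw
  mapsTo _ hv := (mem_singleton_iff.1 hv.2) ▸ hFw

end IsDyadicPLOn

lemma isDyadicPLOn_Icc_of_forall_nhds {F : ℝ → ℝ} (h : ∀ w, ∃ U ∈ 𝓝 w, IsDyadicPLOn F U)
    (a b : ℝ) : IsDyadicPLOn F (Icc a b) :=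
  isCompact_Icc.induction_on (p := IsDyadicPLOn F) ⟨by simp, by simp, by simp [mapsTo_empty]⟩
    (fun _ _ hst ht => ht.mono hst) (fun _ _ hs ht => hs.union ht)
    fun w _ => let ⟨U, hU, hFU⟩ := h w; ⟨U, mem_nhdsWithin_of_mem_nhds hU, hFU⟩

lemma StrictMono.finite_preimage_inter_Icc {P : ℝ → ℝ} (hP : StrictMono P) {S : Set ℝ}
    (hS : ∀ a b, (S ∩ Icc a b).Finite) (a b : ℝ) : (P ⁻¹' S ∩ Icc a b).Finite :=
  (Finite.preimage hP.injective.injOn (hS (P a) (P b))).subset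
    fun _ ⟨hxS, hxa, hxb⟩ => ⟨hxS, hP.monotone hxa, hP.monotone hxb⟩

lemma finite_inter_Icc_of_periodic {B : Set ℝ} (hfin : (B ∩ Ico 0 1).Finite)
    (hper : ∀ x ∈ B, x + 1 ∈ B ∧ x - 1 ∈ B) (a b : ℝ) : (B ∩ Icc a b).Finite := by
  have hint : ∀ n : ℤ, ∀ x ∈ B, x + n ∈ B := by
    intro n
    induction n using Int.induction_on with
    | zero => simp
    | succ n ih => intro x hx; simpa [add_assoc] using (hper _ (ih x hx)).1
    | pred n ih => intro x hx; simpa [sub_eq_add_neg, add_assoc] using (hper _ (ih x hx)).2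
  refine (((finite_Icc ⌊a⌋ ⌊b⌋).prod hfin).image fun p : ℤ × ℝ => p.2 + p.1).subset ?_
  rintro x ⟨hxB, hxa, hxb⟩
  refine ⟨(⌊x⌋, Int.fract x), ⟨⟨Int.floor_mono hxa, Int.floor_mono hxb⟩, ?_,
    Int.fract_nonneg x, Int.fract_lt_one x⟩, Int.fract_add_floor x⟩
  simpa [Int.fract, sub_eq_add_neg] using hint (-⌊x⌋) x hxB

structure IsDyadicPL (F : ℝ → ℝ) : Prop where
  strictMono : StrictMono F
  finite_breaks : ∀ a b, (dyadicBreaks F ∩ Icc a b).Finite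
  breaks_subset : dyadicBreaks F ⊆ dyadics
  mapsTo : MapsTo F dyadics dyadics

lemma isDyadicPL_add_const {p : ℝ} (hp : p ∈ dyadics) : IsDyadicPL (· + p) := by
  have hbreaks : dyadicBreaks (· + p) = ∅ :=
    eq_empty_of_forall_notMem fun x hx => hx (dyadicAffineAt_add_const hp x)
  refine ⟨strictMono_id.add_const p, by simp [hbreaks], by simp [hbreaks],
    fun x hx => add_mem hx hp⟩

namespace IsDyadicPL

variable {F P Q R Φ : ℝ → ℝ}

lemma of_isDyadicPLOn (hmono : StrictMono F) (h : ∀ a b, IsDyadicPLOn F (Icc a b)) :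
    IsDyadicPL F where
  strictMono := hmono
  finite_breaks a b := (h a b).finite_breaks
  breaks_subset x hx := (h x x).breaks_subset ⟨hx, left_mem_Icc.2 le_rfl⟩
  mapsTo x hx := (h x x).mapsTo ⟨hx, left_mem_Icc.2 le_rfl⟩

lemma of_circPL (hmono : StrictMono F) (hPL : CircPL 2 1 F)
    (hdy : ∀ q ∈ zpows 2, F q ∈ zpows 2) : IsDyadicPL F := by
  obtain ⟨B, hBfin, hBper, hBdy, hBaff⟩ := hPL
  have hbreaks : dyadicBreaks F ⊆ B := by
    intro x hx
    by_contra hxB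
    obtain ⟨k, c, ε, hε, hF⟩ := hBaff x hxB
    obtain ⟨q, hq, hqx⟩ := exists_dyadic_abs_sub_lt x hε
    have hc : c = F q - 2 ^ k * q := by simp [hF q hqx]
    refine hx ⟨k, c, hc ▸ sub_mem (hdy q hq) (mul_mem (zpow_mem_dyadics k) hq),
      Metric.eventually_nhds_iff.2 ⟨ε, hε, fun y hy => ?_⟩⟩
    simpa using hF y (by rwa [← Real.dist_eq])
  exact ⟨hmono, fun a b => (finite_inter_Icc_of_periodic hBfin hBper a b).subset
    (inter_subset_inter_left _ hbreaks), hbreaks.trans hBdy, hdy⟩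

lemma circPL (hF : IsDyadicPL F) (hper : ∀ x, F (x + 1) = F x + 1) : CircPL 2 1 F := by
  refine ⟨dyadicBreaks F, (hF.finite_breaks 0 1).subset (inter_subset_inter_right _
    Ico_subset_Icc_self), fun x hx => ⟨?_, ?_⟩, hF.breaks_subset, fun x hx => ?_⟩
  · exact mt (dyadicAffineAt_add_one_iff hper).1 hx
  · exact mt (fun h => by simpa using (dyadicAffineAt_add_one_iff hper).2 h) hx
  · obtain ⟨k, c, -, hFx⟩ := not_not.1 hx
    obtain ⟨ε, hε, hε'⟩ := Metric.eventually_nhds_iff.1 hFx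
    exact ⟨k, c, ε, hε, fun y hy => by simpa using hε' (by rwa [Real.dist_eq])⟩

lemma mem_of_apply_mem (hF : IsDyadicPL F) {x : ℝ} (hx : F x ∈ dyadics) : x ∈ dyadics := by
  by_cases h : DyadicAffineAt F x
  · exact h.mem_of_apply_mem hx
  · exact hF.breaks_subset h

lemma comp (hQ : IsDyadicPL Q) (hP : IsDyadicPL P) : IsDyadicPL (Q ∘ P) := by
  have hbreaks : dyadicBreaks (Q ∘ P) ⊆ dyadicBreaks P ∪ P ⁻¹' dyadicBreaks Q := by
    intro x hx
    by_contra hx'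
    simp only [mem_union, mem_preimage, mem_dyadicBreaks, not_or, not_not] at hx'
    exact hx (hx'.1.comp hx'.2)
  refine ⟨hQ.strictMono.comp hP.strictMono, fun a b => ?_, ?_, hQ.mapsTo.comp hP.mapsTo⟩
  · refine ((hP.finite_breaks a b).union
      (hP.strictMono.finite_preimage_inter_Icc hQ.finite_breaks a b)).subset ?_
    rw [← union_inter_distrib_right]
    exact inter_subset_inter_left _ hbreaks
  · exact hbreaks.trans (union_subset hP.breaks_subset
      fun x hx => hP.mem_of_apply_mem (hQ.breaks_subset hx))

lemma iterate (hF : IsDyadicPL F) (n : ℕ) : IsDyadicPL F^[n] := by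
  induction n with
  | zero =>
    convert isDyadicPL_add_const dyadics.zero_mem using 1
    simp [Function.id_def]
  | succ n ih => rw [iterate_succ']; exact hF.comp ih

/-- On an interval where `Q ∘ Φ = R`, breaks of `Φ` come from breaks of `R` or of `Q`. -/
lemma isDyadicPLOn_of_comp_eqOn (hQ : IsDyadicPL Q) (hR : IsDyadicPL R) (hΦ : StrictMono Φ)
    (hΦc : Continuous Φ) {a b : ℝ} (h : EqOn (Q ∘ Φ) R (Ioo a b)) :
    IsDyadicPLOn Φ (Ioo a b) := by
  have hbreaks : dyadicBreaks Φ ∩ Ioo a b ⊆ (dyadicBreaks R ∪ Φ ⁻¹' dyadicBreaks Q) ∩ Icc a b := by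
    rintro v ⟨hv, hvab⟩
    refine ⟨?_, Ioo_subset_Icc_self hvab⟩
    by_contra hv'
    simp only [mem_union, mem_preimage, mem_dyadicBreaks, not_or, not_not] at hv'
    exact hv (.of_comp hΦc.continuousAt hv'.2
      (hv'.1.congr (eventuallyEq_of_mem (isOpen_Ioo.mem_nhds hvab) h).symm))
  refine ⟨?_, fun v hv => ?_, fun v ⟨hv, hvab⟩ => ?_⟩
  · rw [union_inter_distrib_right] at hbreaks
    exact ((hR.finite_breaks a b).union
      (hΦ.finite_preimage_inter_Icc hQ.finite_breaks a b)).subset hbreaks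
  · rcases (hbreaks hv).1 with hvR | hvQ
    · exact hR.breaks_subset hvR
    · refine hR.mem_of_apply_mem ?_
      rw [← h hv.2]
      exact hQ.mapsTo (hQ.breaks_subset hvQ)
  · refine hQ.mem_of_apply_mem ?_
    rw [← comp_apply (f := Q), h hvab]
    exact hR.mapsTo hv

lemma exists_Ioo_dyadicAffineAt_of_ne (hF : IsDyadicPL F) (x : ℝ) :
    ∃ α < x, ∃ β > x, ∀ y ∈ Ioo α β, y ≠ x → DyadicAffineAt F y := by
  set S := (dyadicBreaks F ∩ Icc (x - 1) (x + 1)) \ {x}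
  have hS : Sᶜ ∈ 𝓝 x := (hF.finite_breaks _ _).sdiff.isClosed.isOpen_compl.mem_nhds (by simp)
  obtain ⟨α, β, ⟨hα, hβ⟩, hsub⟩ := mem_nhds_iff_exists_Ioo_subset.1
    (inter_mem hS (Icc_mem_nhds (by linarith : x - 1 < x) (by linarith : x < x + 1)))
  exact ⟨α, hα, β, hβ, fun y hy hne => by_contra fun hy' => (hsub hy).1 ⟨⟨hy', (hsub hy).2⟩, hne⟩⟩

end IsDyadicPL

lemma map_add_int_of_map_add_one {P : ℝ → ℝ} (h : ∀ y, P (y + 1) = P y + 1) (y : ℝ) (n : ℤ) :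
    P (y + n) = P y + n := by
  have hper : Periodic (fun y => P y - y) 1 := fun y => by simp only [h]; ring
  have := (hper.int_mul n) y
  simp only [mul_one] at this
  linarith

section Conjugation

variable {H : ℝ ≃o ℝ} {G F : ℝ → ℝ}

lemma iterate_apply_of_semiconj (hHG : Semiconj H (2 * ·) G) (s : ℕ) (y : ℝ) :
    G^[s] (H y) = H (2 ^ s * y) := by
  rw [← (hHG.iterate_right s).eq, mul_left_iterate_apply]

/-- The identity `H (2^t F y) = H (2^K y + p)` seen through the conjugacy. -/
lemma iterate_apply_conj_eq (hHG : Semiconj H (2 * ·) G) (hH1 : ∀ y, H (y + 1) = H y + 1)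
    {k : ℤ} {c : ℝ} {t K : ℕ} {p : ℤ} (hrw : ∀ y : ℝ, 2 ^ t * (2 ^ k * y + c) = 2 ^ K * y + p)
    {y : ℝ} (hy : F y = 2 ^ k * y + c) : G^[t] (H (F y)) = G^[K] (H y) + p := by
  rw [iterate_apply_of_semiconj hHG, iterate_apply_of_semiconj hHG, hy, hrw,
    map_add_int_of_map_add_one hH1]

lemma isDyadicPLOn_conj_Ioo (hG : IsDyadicPL G) (hHG : Semiconj H (2 * ·) G)
    (hH1 : ∀ y, H (y + 1) = H y + 1) (hFmono : StrictMono F) (hFc : Continuous F) {α β : ℝ}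
    {k : ℤ} {c : ℝ} (hc : c ∈ dyadics) (hFαβ : EqOn F (fun y => 2 ^ k * y + c) (Ioo α β)) :
    IsDyadicPLOn (H ∘ F ∘ H.symm) (Ioo (H α) (H β)) := by
  obtain ⟨t, K, p, hrw⟩ := exists_two_pow_mul_affine_eq k hc
  refine (hG.iterate t).isDyadicPLOn_of_comp_eqOn
    ((isDyadicPL_add_const (intCast_mem _ p)).comp (hG.iterate K))
    (H.strictMono.comp (hFmono.comp H.symm.strictMono))
    (H.continuous.comp (hFc.comp H.symm.continuous)) fun v hv => ?_
  have hv' : H.symm v ∈ Ioo α β := ⟨H.lt_symm_apply.2 hv.1, H.symm_apply_lt.2 hv.2⟩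
  simpa using iterate_apply_conj_eq hHG hH1 hrw (hFαβ hv')

lemma exists_nhds_isDyadicPLOn_conj (hG : IsDyadicPL G) (hHG : Semiconj H (2 * ·) G)
    (hH1 : ∀ y, H (y + 1) = H y + 1) (hHdy : MapsTo H dyadics dyadics) (hF : IsDyadicPL F)
    (hFc : Continuous F) (w : ℝ) : ∃ U ∈ 𝓝 w, IsDyadicPLOn (H ∘ F ∘ H.symm) U := by
  obtain ⟨x, rfl⟩ := H.surjective w
  by_cases hx : DyadicAffineAt F x
  · obtain ⟨α, hα, β, hβ, k, c, hc, hFαβ⟩ := hx.exists_eqOn_Ioo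
    exact ⟨_, Ioo_mem_nhds (H.strictMono hα) (H.strictMono hβ),
      isDyadicPLOn_conj_Ioo hG hHG hH1 hF.strictMono hFc hc hFαβ⟩
  -- At a break `x` of `F`, use the affine pieces of `F` on either side of `x`.
  obtain ⟨α, hα, β, hβ, hαβ⟩ := hF.exists_Ioo_dyadicAffineAt_of_ne x
  obtain ⟨k₁, c₁, hc₁, hF₁⟩ := exists_eqOn_Ioo_of_forall_dyadicAffineAt hα
    fun y hy => hαβ y ⟨hy.1, hy.2.trans hβ⟩ hy.2.ne
  obtain ⟨k₂, c₂, hc₂, hF₂⟩ := exists_eqOn_Ioo_of_forall_dyadicAffineAt hβ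
    fun y hy => hαβ y ⟨hα.trans hy.1, hy.2⟩ hy.1.ne'
  have hxdy : x ∈ dyadics := hF.breaks_subset hx
  refine ⟨_, Ioo_mem_nhds (H.strictMono hα) (H.strictMono hβ), ?_⟩
  rw [← Ioc_union_Ioo_eq_Ioo (H.strictMono hα).le (H.strictMono hβ),
    ← Ioo_union_right (H.strictMono hα)]
  refine ((isDyadicPLOn_conj_Ioo hG hHG hH1 hF.strictMono hFc hc₁ hF₁).union
    (.singleton (hHdy hxdy) ?_)).union (isDyadicPLOn_conj_Ioo hG hHG hH1 hF.strictMono hFc hc₂ hF₂)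
  simpa using hHdy (hF.mapsTo hxdy)

lemma isDyadicPL_conj (hG : IsDyadicPL G) (hHG : Semiconj H (2 * ·) G)
    (hH1 : ∀ y, H (y + 1) = H y + 1) (hHdy : MapsTo H dyadics dyadics) (hF : IsDyadicPL F)
    (hFc : Continuous F) : IsDyadicPL (H ∘ F ∘ H.symm) :=
  .of_isDyadicPLOn (H.strictMono.comp (hF.strictMono.comp H.symm.strictMono))
    (isDyadicPLOn_Icc_of_forall_nhds (exists_nhds_isDyadicPLOn_conj hG hHG hH1 hHdy hF hFc))

end Conjugation

lemma OrientedHomeo.exists_orderIso {r : ℝ} {h : AddCircle r → AddCircle r}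
    (hh : OrientedHomeo r h) :
    ∃ H : ℝ ≃o ℝ, (∀ x : ℝ, h x = H x) ∧ ∀ x, H (x + r) = H x + r :=
  let ⟨H, hlift, hper, hmono, hsurj⟩ := hh
  ⟨StrictMono.orderIsoOfSurjective H hmono hsurj, hlift, hper⟩

lemma exists_int_eq_add_of_coe_eq {a b : ℝ} (h : (a : AddCircle (1 : ℝ)) = b) :
    ∃ n : ℤ, a = b + n := by
  obtain ⟨n, hn⟩ := (AddCircle.coe_eq_zero_iff 1).1 (by rw [AddCircle.coe_sub, h, sub_self] :
    ((a - b : ℝ) : AddCircle (1 : ℝ)) = 0)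
  exact ⟨n, by simp at hn; linarith⟩

lemma exists_int_forall_eq_add {u v : ℝ → ℝ} (hu : Continuous u) (hv : Continuous v)
    (h : ∀ x, (u x : AddCircle (1 : ℝ)) = v x) : ∃ n : ℤ, ∀ x, u x = v x + n := by
  have hint : ∀ x, u x - v x ∈ range ((↑) : ℤ → ℝ) := fun x =>
    let ⟨n, hn⟩ := exists_int_eq_add_of_coe_eq (h x)
    ⟨n, by linarith⟩
  obtain ⟨n, hn⟩ := hint 0
  refine ⟨n, fun x => ?_⟩
  have := isPreconnected_univ.constant_of_mapsTo
    Int.isClosedEmbedding_coe_real.isInducing.isDiscrete_range (hu.sub hv).continuousOn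
    (fun x _ => hint x) (mem_univ x) (mem_univ 0)
  simp only [Pi.sub_apply] at this
  linarith

lemma IsDyadicPL.memT {Φ : ℝ → ℝ} {f : AddCircle (1 : ℝ) → AddCircle (1 : ℝ)}
    (hΦ : IsDyadicPL Φ) (hsurj : Surjective Φ) (hper : ∀ x, Φ (x + 1) = Φ x + 1)
    (hlift : ∀ x : ℝ, f x = Φ x) : MemT 2 1 f :=
  ⟨Φ, hlift, hper, hΦ.strictMono, hsurj, hΦ.circPL hper, fun _ hq => hΦ.mapsTo hq⟩

theorem stmt_18_general (h h' : AddCircle (1 : ℝ) → AddCircle (1 : ℝ))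
    (hh : OrientedHomeo 1 h)
    (hinv₁ : ∀ z, h' (h z) = z)
    (hdy : ∀ z ∈ dyadicCircle, h z ∈ dyadicCircle)
    (hconj : MemTbar 2 1 (h ∘ nu2 ∘ h')) :
    ∀ f, MemT 2 1 f → MemT 2 1 (h ∘ f ∘ h') := by
  obtain ⟨H, hHlift, hH1⟩ := hh.exists_orderIso
  have hh'lift (x : ℝ) : h' x = H.symm x := by rw [← hinv₁ (H.symm x), hHlift, H.apply_symm_apply]
  have hHdy : MapsTo H dyadics dyadics := fun q hq => by
    obtain ⟨q', hq', hhq⟩ := hdy q ⟨q, hq, rfl⟩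
    obtain ⟨n, hn⟩ := exists_int_eq_add_of_coe_eq ((hHlift q).symm.trans hhq)
    exact hn ▸ add_mem hq' (intCast_mem _ n)
  obtain ⟨G, -, -, hGlift, -, hGmono, hGc, hGPL, hGdy⟩ := hconj
  obtain ⟨n, hn⟩ := exists_int_forall_eq_add (u := fun x => H (2 * H.symm x))
    (by fun_prop) hGc fun x => by
      rw [← hGlift, comp_apply, comp_apply, hh'lift, nu2, ← AddCircle.coe_add, ← two_mul, hHlift]
  have hG : IsDyadicPL ((· + n) ∘ G) :=
    (isDyadicPL_add_const (intCast_mem _ n)).comp (.of_circPL hGmono hGPL hGdy)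
  have hHG : Semiconj H (2 * ·) ((· + n) ∘ G) := fun y => by simpa using hn (H y)
  rintro f ⟨F, hFlift, hF1, hFmono, hFsurj, hFPL, hFdy⟩
  refine (isDyadicPL_conj hG hHG hH1 hHdy (.of_circPL hFmono hFPL hFdy)
    (hFmono.monotone.continuous_of_surjective hFsurj)).memT
    (H.surjective.comp (hFsurj.comp H.symm.surjective)) (fun x => ?_) fun x => ?_
  · have hHsymm1 : H.symm (x + 1) = H.symm x + 1 := H.symm_apply_eq.2 (by simp [hH1])
    simp [hHsymm1, hF1, hH1]
  · simp [hh'lift, hFlift, hHlift]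

/-- **Lemma 12.1.** If `h` is an orientation-preserving homeomorphism of
`S¹` with `h(ℤ[1/2]) ⊆ ℤ[1/2]` such that `h ν₂ h⁻¹` is an everywhere-defined element of
`T̄_{2,1}`, then `h T_{2,1} h⁻¹ ⊆ T_{2,1}`. -/
theorem stmt_18 (h h' : AddCircle (1 : ℝ) → AddCircle (1 : ℝ))
    (hh : OrientedHomeo 1 h)
    (hinv₁ : ∀ z, h' (h z) = z) (hinv₂ : ∀ z, h (h' z) = z)
    (hdy : ∀ z ∈ dyadicCircle, h z ∈ dyadicCircle)
    (hconj : MemTbar 2 1 (h ∘ nu2 ∘ h')) :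
    ∀ f, MemT 2 1 f → MemT 2 1 (h ∘ f ∘ h') :=
  stmt_18_general h h' hh hinv₁ hdy hconj
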